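/- arXiv:0810.5587 — 2 statements merged into one kernel-verified Lean document; each statement's English description precedes it below -/
import Mathlib

section
/- Let λ be a singular cardinal and D an ultrafilter such that for every cardinal ν' < λ there is a cardinal ν with ν' < ν < λ for which D is ν-decomposable, and suppose in addition that D is (μ, cf λ)-regular (μ an infinite cardinal). Then for every cardinal λ' with μ ≤ λ' < λ there exists a cardinal κ with λ ≤ κ ≤ COV(λ, λ', μ) such that D is κ-decomposable; in particular, D is κ-decomposable for some κ with λ ≤ κ ≤ λ^{<μ}. -/
/-! Choose cardinals `θ β < λ` (`β < cf λ`) cofinal in `λ` and, for each `β`, a map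
`f β : I → λ` witnessing `ν β`-decomposability for some `ν β > θ β`. If `X β` is the regularity
family, every `i` lies in fewer than `μ` of the `X β`, so `G i = {f β i | i ∈ X β}` has size
`< μ` and `≤ cf λ`. No `W ⊆ λ` with `|W| < λ` contains `G i` for `D`-almost all `i`, since
`|W| ≤ θ β` for some `β` and then `(f β)⁻¹ W ∉ D`. Hence if a family `𝒜` of subsets of `λ`, all
of size `≤ b < λ`, covers every `G i`, then a map `h` sending `i` to a member of `𝒜` containing
`G i` pulls no set of size `< λ` back into `D`, and the least size of a `Y` with `h⁻¹ Y ∈ D` is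
a `κ ∈ [λ, |𝒜|]` for which `D` is `κ`-decomposable. Take for `𝒜` a family witnessing
`COV(λ, λ', μ)`, resp. all subsets of `λ` of size `≤ cf λ` and `< μ`; there are at most
`λ^{<μ}` of the latter. -/

universe u

open Cardinal

namespace Paper

/-- Form I: the ultrafilter `D` is `(a, b)`-regular: there is a family of `b`-many
members of `D` such that the intersection of any `a`-many of them is empty. -/
def IsRegularUF {I : Type u} (D : Ultrafilter I) (a b : Cardinal.{u}) : Prop :=
  ∃ X : b.out → Set I, (∀ β, X β ∈ D) ∧
    ∀ B : Set b.out, #B = a → ⋂ β ∈ B, X β = ∅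

/-- `D` is `κ`-decomposable: there is `f : I → κ` such that the preimage of any
subset of size `< κ` is not in `D`. -/
def IsDecomposable {I : Type u} (D : Ultrafilter I) (κ : Cardinal.{u}) : Prop :=
  ∃ f : I → κ.out, ∀ X : Set κ.out, #X < κ → f ⁻¹' X ∉ D

/-- The cardinality of the ultrapower `∏_D c` of a cardinal `c` modulo `D`. -/
noncomputable def ultraPowCard {I : Type u} (D : Ultrafilter I) (c : Cardinal.{u}) :
    Cardinal.{u} :=
  #((D : Filter I).Germ c.out)

/-- The cofinality of the linearly ordered ultrapower `∏_D ⟨κ, <⟩`: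
the least cardinality of a cofinal subset. -/
noncomputable def germOrderCof {I : Type u} (D : Ultrafilter I) (κ : Cardinal.{u}) :
    Cardinal.{u} :=
  sInf { c | ∃ S : Set ((D : Filter I).Germ κ.ord.ToType), #S = c ∧ ∀ x, ∃ y ∈ S, x ≤ y }

/-- `f` is a `κ`-least function for `D`. -/
def IsKLeastFunction {I : Type u} (D : Ultrafilter I) (κ : Cardinal.{u})
    (f : I → Ordinal.{u}) : Prop :=
  (∀ i, f i < κ.ord) ∧
  (∀ α < κ.ord, { i | α < f i } ∈ D) ∧
  ∀ g : I → Ordinal.{u}, (∀ i, g i < κ.ord) → { i | g i < f i } ∈ D →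
    ∃ α < κ.ord, { i | g i < α } ∈ D

/-- The product of two ultrafilters:
`X ∈ D ×ᵤ D'` iff `{i | {i' | (i,i') ∈ X} ∈ D'} ∈ D`. -/
def uprod {I I' : Type u} (D : Ultrafilter I) (D' : Ultrafilter I') : Ultrafilter (I × I') :=
  D.bind fun i => D'.map fun i' => (i, i')

/-- The `D`-sum of the ultrafilters `Di`. -/
def usum {I : Type u} {J : I → Type u} (D : Ultrafilter I) (Di : ∀ i, Ultrafilter (J i)) :
    Ultrafilter (Σ i, J i) :=
  D.bind fun i => (Di i).map fun j => ⟨i, j⟩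

/-- `D` is `κ`-complete: intersections of fewer than `κ` members of `D` are in `D`. -/
def IsComplete {I : Type u} (D : Ultrafilter I) (κ : Cardinal.{u}) : Prop :=
  ∀ S : Set (Set I), #S < κ → (∀ s ∈ S, s ∈ D) → ⋂₀ S ∈ D

/-- `COV(λ, λ', μ)`: the least cardinality of a family of subsets of `λ`, each of
cardinality `< λ'`, such that every subset of `λ` of cardinality `< μ` is contained
in a member of the family. -/
noncomputable def cov (lam lam' μ : Cardinal.{u}) : Cardinal.{u} :=
  sInf { c | ∃ H : Set (Set lam.out), #H = c ∧ (∀ x ∈ H, #x < lam') ∧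
      ∀ s : Set lam.out, #s < μ → ∃ x ∈ H, s ⊆ x }

/-- Iterated beth: `bethIter 0 lam = lam`, `bethIter (m+1) lam = 2 ^ bethIter m lam`. -/
def bethIter (m : ℕ) (lam : Cardinal.{u}) : Cardinal.{u} :=
  (fun c => (2 : Cardinal.{u}) ^ c)^[m] lam

lemma le_powerlt_of_two_le {a : Cardinal.{u}} (ha : 2 ≤ a) (b : Cardinal.{u}) : b ≤ a ^< b := by
  by_contra! hlt
  have := calc a ^< b < 2 ^ (a ^< b) := cantor _
    _ ≤ a ^ (a ^< b) := power_le_power_right ha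
    _ ≤ a ^< b := le_powerlt a hlt
  exact this.false

lemma mk_setOf_mk_lt_le_powerlt {α : Type u} (hα : ℵ₀ ≤ #α) {κ : Cardinal.{u}} (hκ : 1 < κ) :
    #{s : Set α | #s < κ} ≤ #α ^< κ := by
  have hinf : ℵ₀ ≤ #α ^< κ := hα.trans (by simpa using le_powerlt #α hκ)
  have hunion : {s : Set α | #s < κ} ⊆ ⋃ x : κ.ord.ToType, {s | #s ≤ (x : Ordinal).card} := by
    intro s hs
    refine Set.mem_iUnion.mpr ⟨Ordinal.ToType.mk ⟨(#s).ord, ord_lt_ord.mpr hs⟩, ?_⟩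
    simp
  calc #{s : Set α | #s < κ}
      ≤ #κ.ord.ToType * ⨆ x : κ.ord.ToType, #{s : Set α | #s ≤ (x : Ordinal).card} :=
        (mk_le_mk_of_subset hunion).trans (mk_iUnion_le _)
    _ ≤ #α ^< κ * #α ^< κ := by
        refine mul_le_mul' ?_ (ciSup_le' fun x => ?_)
        · rw [mk_ord_toType]
          exact le_powerlt_of_two_le ((natCast_lt_aleph0 (n := 2)).le.trans hα) κ
        · calc #{s : Set α | #s ≤ (x : Ordinal).card}
              ≤ max #α ℵ₀ ^ (x : Ordinal).card := mk_bounded_set_le α _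
            _ ≤ #α ^< κ := by
                rw [max_eq_left hα]
                exact le_powerlt _ (lt_ord.mp (Ordinal.ToType.mk.symm x).2)
    _ = #α ^< κ := mul_eq_self hinf

lemma exists_cofinal_family_lt (c : Cardinal.{u}) :
    ∃ θ : c.ord.cof.out → Cardinal.{u}, (∀ β, θ β < c) ∧ ∀ w < c, ∃ β, w ≤ θ β := by
  obtain ⟨S, hS, hScard⟩ := Order.exists_cof_eq c.ord.ToType
  rw [Ordinal.cof_toType] at hScard
  obtain ⟨e⟩ : Nonempty (c.ord.cof.out ≃ S) := Cardinal.eq.mp (by rw [mk_out, hScard])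
  refine ⟨fun β => (Ordinal.ToType.mk.symm (e β).1).1.card,
    fun β => lt_ord.mp (Ordinal.ToType.mk.symm _).2, fun w hw => ?_⟩
  obtain ⟨s, hsS, hws⟩ := hS (Ordinal.ToType.mk ⟨w.ord, ord_lt_ord.mpr hw⟩)
  refine ⟨e.symm ⟨s, hsS⟩, ?_⟩
  simp only [Equiv.apply_symm_apply, ← ord_le]
  simpa [← Subtype.coe_le_coe] using Ordinal.ToType.mk.symm.monotone hws

section Decomposability

variable {I : Type u} (D : Ultrafilter I)

def IsDecomposingMap {A : Type u} (κ : Cardinal.{u}) (f : I → A) : Prop :=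
  ∀ Y : Set A, #Y < κ → f ⁻¹' Y ∉ D

def EscapesSmallSets {α : Type u} (κ : Cardinal.{u}) (G : I → Set α) : Prop :=
  ∀ W : Set α, #W < κ → ¬ ∀ᶠ i in (D : Filter I), G i ⊆ W

variable {D}

lemma IsDecomposable.exists_isDecomposingMap {ν : Cardinal.{u}} (hν : IsDecomposable D ν)
    {α : Type u} (hα : ν ≤ #α) : ∃ f : I → α, IsDecomposingMap D ν f := by
  obtain ⟨f, hf⟩ := hν
  obtain ⟨e⟩ : Nonempty (ν.out ↪ α) := by rwa [← le_def, mk_out]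
  refine ⟨e ∘ f, fun Y hY hYD => hf (e ⁻¹' Y) ?_ hYD⟩
  exact (mk_preimage_of_injective _ _ e.injective).trans_lt hY

lemma IsDecomposingMap.exists_isDecomposable {A : Type u} {κ : Cardinal.{u}} {h : I → A}
    (hh : IsDecomposingMap D κ h) : ∃ κ', κ ≤ κ' ∧ κ' ≤ #A ∧ IsDecomposable D κ' := by
  set T := {c | ∃ Y : Set A, #Y = c ∧ h ⁻¹' Y ∈ D}
  set κ' := sInf T
  obtain ⟨Y, hYκ, hYD⟩ : κ' ∈ T :=
    csInf_mem ⟨#(Set.univ : Set A), Set.univ, rfl, Filter.univ_mem⟩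
  have hmin : ∀ Z : Set A, #Z < κ' → h ⁻¹' Z ∉ D := fun Z hZ hZD =>
    (csInf_le' (show #Z ∈ T from ⟨Z, rfl, hZD⟩)).not_gt hZ
  obtain ⟨y₀, hy₀⟩ : Y.Nonempty := Set.nonempty_iff_ne_empty.mpr (by rintro rfl; simp at hYD)
  obtain ⟨e⟩ : Nonempty (Y ≃ κ'.out) := Cardinal.eq.mp (by rw [mk_out, hYκ])
  refine ⟨κ', le_of_not_gt fun hlt => hh Y (hYκ ▸ hlt) hYD, hYκ ▸ mk_set_le Y, ?_⟩
  classical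
  refine ⟨fun i => e (if hi : h i ∈ Y then ⟨h i, hi⟩ else ⟨y₀, hy₀⟩), fun X hX hXD => ?_⟩
  refine hmin (Subtype.val '' (e ⁻¹' X)) ?_ (Filter.mem_of_superset (Filter.inter_mem hXD hYD) ?_)
  · calc #(Subtype.val '' (e ⁻¹' X)) ≤ #(e ⁻¹' X) := mk_image_le
      _ ≤ #X := mk_preimage_of_injective _ _ e.injective
      _ < κ' := hX
  · rintro i ⟨hiX, hiY : h i ∈ Y⟩
    rw [Set.mem_preimage, dif_pos hiY] at hiX
    exact ⟨⟨h i, hiY⟩, hiX, rfl⟩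

lemma escapesSmallSets_image {α J : Type u} {κ : Cardinal.{u}} {X : J → Set I}
    (hX : ∀ β, X β ∈ D) {f : J → I → α} (hf : ∀ W : Set α, #W < κ → ∃ β, f β ⁻¹' W ∉ D) :
    EscapesSmallSets D κ fun i => (fun β => f β i) '' {β | i ∈ X β} := by
  intro W hW hGW
  obtain ⟨β, hβ⟩ := hf W hW
  refine hβ (Filter.mem_of_superset (Filter.inter_mem hGW (hX β)) ?_)
  rintro i ⟨hi, hiX⟩
  exact hi ⟨β, hiX, rfl⟩

lemma EscapesSmallSets.exists_isDecomposable {α : Type u} {κ b : Cardinal.{u}} {G : I → Set α}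
    (hG : EscapesSmallSets D κ G) (hκ : ℵ₀ ≤ κ) (hb : b < κ) (𝒜 : Set (Set α))
    (h𝒜 : ∀ x ∈ 𝒜, #x ≤ b) (hcov : ∀ i, ∃ x ∈ 𝒜, G i ⊆ x) :
    ∃ κ', κ ≤ κ' ∧ κ' ≤ #𝒜 ∧ IsDecomposable D κ' := by
  choose h hmem hGh using hcov
  refine IsDecomposingMap.exists_isDecomposable (h := fun i => (⟨h i, hmem i⟩ : 𝒜)) ?_
  intro Y hY hYD
  refine hG (⋃ x ∈ Y, x.1) ?_ (Filter.mem_of_superset hYD fun i hi => ?_)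
  · calc #(⋃ x ∈ Y, x.1) ≤ #Y * ⨆ x : Y, #x.1.1 := mk_biUnion_le _ _
      _ < κ := mul_lt_of_lt hκ hY ((ciSup_le' fun x => h𝒜 _ x.1.2).trans_lt hb)
  · exact (hGh i).trans (Set.subset_biUnion_of_mem (u := fun x : 𝒜 => x.1) hi)

end Decomposability

lemma mk_setOf_mem_lt_of_iInter_eq_empty {I J : Type u} {X : J → Set I} {a : Cardinal.{u}}
    (hX : ∀ B : Set J, #B = a → ⋂ β ∈ B, X β = ∅) (i : I) : #{β | i ∈ X β} < a := by
  by_contra! h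
  obtain ⟨B, hB, hBa⟩ := le_mk_iff_exists_subset.mp h
  have hi : i ∈ ⋂ β ∈ B, X β := Set.mem_iInter₂.mpr fun β hβ => hB hβ
  simp [hX B hBa] at hi

lemma exists_covering_family_card_eq_cov {lam lam' μ : Cardinal.{u}} (h : μ ≤ lam') :
    ∃ H : Set (Set lam.out), #H = cov lam lam' μ ∧ (∀ x ∈ H, #x < lam') ∧
      ∀ s : Set lam.out, #s < μ → ∃ x ∈ H, s ⊆ x := by
  apply csInf_mem (s := {c | ∃ H : Set (Set lam.out), #H = c ∧ (∀ x ∈ H, #x < lam') ∧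
    ∀ s : Set lam.out, #s < μ → ∃ x ∈ H, s ⊆ x})
  exact ⟨_, {s | #s < μ}, rfl, fun _ hx => hx.trans_le h, fun s hs => ⟨s, hs, subset_rfl⟩⟩

lemma exists_escapesSmallSets {I : Type u} {D : Ultrafilter I} {lam mu : Cardinal.{u}}
    (hdec : ∀ ν' < lam, ∃ ν, ν' < ν ∧ ν < lam ∧ IsDecomposable D ν)
    (hreg : IsRegularUF D mu lam.ord.cof) :
    ∃ G : I → Set lam.out, EscapesSmallSets D lam G ∧ ∀ i, #(G i) ≤ lam.ord.cof ∧ #(G i) < mu := by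
  obtain ⟨X, hXD, hXreg⟩ := hreg
  obtain ⟨θ, hθlam, hθcof⟩ := exists_cofinal_family_lt lam
  choose ν hθν hνlam hνdec using fun β => hdec (θ β) (hθlam β)
  choose f hf using fun β =>
    (hνdec β).exists_isDecomposingMap (α := lam.out) (by rw [mk_out]; exact (hνlam β).le)
  refine ⟨fun i => (fun β => f β i) '' {β | i ∈ X β}, ?_, fun i => ⟨?_, ?_⟩⟩
  · refine escapesSmallSets_image hXD fun W hW => ?_
    obtain ⟨β, hβ⟩ := hθcof _ hW
    exact ⟨β, hf β W (hβ.trans_lt (hθν β))⟩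
  · exact mk_image_le.trans ((mk_set_le _).trans (mk_out _).le)
  · exact mk_image_le.trans_lt (mk_setOf_mem_lt_of_iInter_eq_empty hXreg i)

/-- Theorem 5.1(b): if `λ` is singular, there are arbitrarily large `ν < λ` for which
`D` is `ν`-decomposable, and `D` is `(μ, cf λ)`-regular, then for every
`μ ≤ λ' < λ` there is `κ` with `λ ≤ κ ≤ COV(λ, λ', μ)` such that `D` is
`κ`-decomposable; in particular `D` is `κ`-decomposable for some `λ ≤ κ ≤ λ^{<μ}`. -/
theorem stmt9 {I : Type u} (D : Ultrafilter I) (lam mu : Cardinal.{u})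
    (hmu : ℵ₀ ≤ mu) (hlam : ℵ₀ ≤ lam) (hsing : lam.ord.cof < lam)
    (hdec : ∀ ν' < lam, ∃ ν, ν' < ν ∧ ν < lam ∧ IsDecomposable D ν)
    (hreg : IsRegularUF D mu lam.ord.cof) :
    (∀ lam', mu ≤ lam' → lam' < lam →
        ∃ κ, lam ≤ κ ∧ κ ≤ cov lam lam' mu ∧ IsDecomposable D κ) ∧
      ∃ κ, lam ≤ κ ∧ κ ≤ lam ^< mu ∧ IsDecomposable D κ := by
  obtain ⟨G, hG, hGsmall⟩ := exists_escapesSmallSets hdec hreg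
  refine ⟨fun lam' hmu' hlam' => ?_, ?_⟩
  · obtain ⟨H, hHcard, hHsmall, hHcov⟩ := exists_covering_family_card_eq_cov (lam := lam) hmu'
    obtain ⟨κ, hκ, hκH, hκdec⟩ := hG.exists_isDecomposable hlam hlam' H
      (fun x hx => (hHsmall x hx).le) fun i => hHcov _ (hGsmall i).2
    exact ⟨κ, hκ, hHcard ▸ hκH, hκdec⟩
  · obtain ⟨κ, hκ, hκA, hκdec⟩ := hG.exists_isDecomposable hlam hsing
      {s | #s ≤ lam.ord.cof ∧ #s < mu} (fun _ hx => hx.1) fun i => ⟨G i, hGsmall i, subset_rfl⟩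
    refine ⟨κ, hκ, hκA.trans ?_, hκdec⟩
    calc #{s : Set lam.out | #s ≤ lam.ord.cof ∧ #s < mu}
        ≤ #{s : Set lam.out | #s < mu} := mk_le_mk_of_subset fun _ hs => hs.2
      _ ≤ #lam.out ^< mu :=
        mk_setOf_mk_lt_le_powerlt (by rwa [mk_out]) (one_lt_aleph0.trans_le hmu)
      _ = lam ^< mu := by rw [mk_out]

end Paper
end

section
/- Let D and D' be ultrafilters and λ, μ infinite cardinals. Then D × D' is (λ, μ)-regular if and only if there is a cardinal ν such that D is (ν, μ)-regular and D' is (λ, ν')-regular for every infinite cardinal ν' < ν. In particular, D × D' is (λ, λ)-regular if and only if either D is (λ, λ)-regular or D' is (λ, λ)-regular. -/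
universe u

open Cardinal

namespace Paper

/-
A family witnessing `(λ, μ)`-regularity of `D × D'` splits along the first coordinate: the
`β` whose section at `i` lies in `D'` form a set `Z i`, the sets `{i | β ∈ Z i}` lie in `D`, and
the sections at `i` witness `(λ, #(Z i))`-regularity of `D'`. The cardinal `ν` is the least strict
upper bound of the `#(Z i)`. Conversely, from a `(ν, μ)`-regular family in `D` and, for each `i`,
a `(λ, #(Z i))`-regular family in `D'` (available since `#(Z i) < ν`), the same recipe read
backwards glues a `(λ, μ)`-regular family in `D × D'`.
-/

lemma exists_least_strict_upper_bound {ι : Type u} (f : ι → Cardinal.{u}) :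
    ∃ ν, (∀ i, f i < ν) ∧ ∀ ν' < ν, ∃ i, ν' ≤ f i := by
  have hbdd : BddAbove (Set.range fun i => Order.succ (f i)) := Cardinal.bddAbove_of_small
  refine ⟨⨆ i, Order.succ (f i), fun i => ?_, fun ν' hν' => ?_⟩
  · exact (Order.lt_succ (f i)).trans_le (le_ciSup hbdd i)
  · obtain ⟨i, hi⟩ := (lt_ciSup_iff' hbdd).1 hν'
    exact ⟨i, Order.lt_succ_iff.1 hi⟩

section Regularity

variable {I : Type u} {D : Ultrafilter I} {a b : Cardinal.{u}}

lemma forall_biInter_eq_empty_iff {ι : Type u} {X : ι → Set I} :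
    (∀ B : Set ι, #B = a → ⋂ β ∈ B, X β = ∅) ↔ ∀ i, #{β | i ∈ X β} < a := by
  refine ⟨fun h i => not_le.1 fun hle => ?_, fun h B hB => ?_⟩
  · obtain ⟨B, hB, hBa⟩ := Cardinal.le_mk_iff_exists_subset.1 hle
    exact (h B hBa).subset (Set.mem_iInter₂.2 hB)
  · refine Set.eq_empty_of_forall_notMem fun i hi => (h i).not_ge ?_
    exact hB ▸ Cardinal.mk_le_mk_of_subset fun β hβ => Set.mem_iInter₂.1 hi β hβ

def IsRegularFamily (D : Ultrafilter I) (a : Cardinal.{u}) {ι : Type u} (X : ι → Set I) :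
    Prop :=
  (∀ β, X β ∈ D) ∧ ∀ i, #{β | i ∈ X β} < a

lemma isRegularUF_iff : IsRegularUF D a b ↔ ∃ X : b.out → Set I, IsRegularFamily D a X := by
  simp only [IsRegularUF, IsRegularFamily, forall_biInter_eq_empty_iff]

lemma IsRegularFamily.comp_injective {ι κ : Type u} {X : ι → Set I}
    (hX : IsRegularFamily D a X) {f : κ → ι} (hf : Function.Injective f) :
    IsRegularFamily D a (X ∘ f) :=
  ⟨fun β => hX.1 (f β), fun i =>
    (Cardinal.mk_preimage_of_injective f {β | i ∈ X β} hf).trans_lt (hX.2 i)⟩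

lemma IsRegularFamily.mono {ι : Type u} {X : ι → Set I} {a' : Cardinal.{u}}
    (hX : IsRegularFamily D a X) (h : a ≤ a') : IsRegularFamily D a' X :=
  ⟨hX.1, fun i => (hX.2 i).trans_le h⟩

lemma isRegularFamily_const_univ {ι : Type u} (h : #ι < a) :
    IsRegularFamily D a fun _ : ι => (Set.univ : Set I) :=
  ⟨fun _ => Filter.univ_mem, fun _ => (Cardinal.mk_subtype_le _).trans_lt h⟩

lemma IsRegularFamily.isRegularUF {ι : Type u} {X : ι → Set I} (hX : IsRegularFamily D a X)
    (hb : b ≤ #ι) : IsRegularUF D a b := by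
  obtain ⟨f⟩ : Nonempty (b.out ↪ ι) := by rwa [← Cardinal.le_def, Cardinal.mk_out]
  exact isRegularUF_iff.2 ⟨X ∘ f, hX.comp_injective f.injective⟩

lemma IsRegularUF.exists_isRegularFamily (h : IsRegularUF D a b) {ι : Type u} (hι : #ι ≤ b) :
    ∃ X : ι → Set I, IsRegularFamily D a X := by
  obtain ⟨X, hX⟩ := isRegularUF_iff.1 h
  obtain ⟨f⟩ : Nonempty (ι ↪ b.out) := by rwa [← Cardinal.le_def, Cardinal.mk_out]
  exact ⟨X ∘ f, hX.comp_injective f.injective⟩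

lemma isRegularUF_of_lt (h : b < a) : IsRegularUF D a b :=
  (isRegularFamily_const_univ ((Cardinal.mk_out b).trans_lt h)).isRegularUF (Cardinal.mk_out b).ge

lemma IsRegularUF.mono_left {a' : Cardinal.{u}} (hr : IsRegularUF D a b) (h : a ≤ a') :
    IsRegularUF D a' b := by
  obtain ⟨X, hX⟩ := isRegularUF_iff.1 hr
  exact (hX.mono h).isRegularUF (Cardinal.mk_out b).ge

lemma IsRegularUF.mono_right {b' : Cardinal.{u}} (hr : IsRegularUF D a b) (h : b' ≤ b) :
    IsRegularUF D a b' := by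
  obtain ⟨X, hX⟩ := hr.exists_isRegularFamily (Cardinal.mk_out b).le
  exact hX.isRegularUF ((Cardinal.mk_out b).symm ▸ h)

end Regularity

section Product

variable {I I' : Type u} {D : Ultrafilter I} {D' : Ultrafilter I'} {a : Cardinal.{u}}

lemma mem_uprod {X : Set (I × I')} :
    X ∈ uprod D D' ↔ {i | {i' | (i, i') ∈ X} ∈ D'} ∈ D := by
  change X ∈ (D : Filter I).bind (fun i => Filter.map (fun i' => (i, i')) D') ↔ _
  simp only [Filter.mem_bind, Filter.mem_map, Set.preimage, Ultrafilter.mem_coe]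
  exact ⟨fun ⟨t, ht, h⟩ => D.toFilter.mem_of_superset ht h, fun h => ⟨_, h, fun _ hx => hx⟩⟩

lemma isRegularFamily_sections {ι : Type u} {X : ι → Set (I × I')}
    (hX : ∀ p, #{β | p ∈ X β} < a) (i : I) :
    IsRegularFamily D' a
      fun β : {β | {i' | (i, i') ∈ X β} ∈ D'} => {i' | (i, i') ∈ X β} := by
  refine ⟨fun β => β.2, fun i' => ?_⟩
  exact (Cardinal.mk_preimage_of_injective _ {β | (i, i') ∈ X β} Subtype.val_injective).trans_lt
    (hX (i, i'))

lemma isRegularFamily_uprod {ι : Type u} {Y : ι → Set I} (hY : ∀ β, Y β ∈ D)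
    {W : ∀ i, {β | i ∈ Y β} → Set I'} (hW : ∀ i, IsRegularFamily D' a (W i)) :
    IsRegularFamily (uprod D D') a
      fun β => {p | ∃ h : p.1 ∈ Y β, p.2 ∈ W p.1 ⟨β, h⟩} := by
  refine ⟨fun β => mem_uprod.2 ?_, fun ⟨i, i'⟩ => ?_⟩
  · exact (D : Filter I).mem_of_superset (hY β) fun i hi =>
      (D' : Filter I').mem_of_superset ((hW i).1 ⟨β, hi⟩) fun i' hi' => ⟨hi, hi'⟩
  · have hfiber : {β | (i, i') ∈ {p : I × I' | ∃ h : p.1 ∈ Y β, p.2 ∈ W p.1 ⟨β, h⟩}} =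
        Subtype.val '' {z | i' ∈ W i z} := by
      ext β
      exact ⟨fun ⟨h, hw⟩ => ⟨⟨β, h⟩, hw, rfl⟩, fun ⟨z, hz, hzβ⟩ => hzβ ▸ ⟨z.2, hz⟩⟩
    rw [hfiber, Cardinal.mk_image_eq Subtype.val_injective]
    exact (hW i).2 i'

lemma IsRegularUF.exists_of_uprod {b : Cardinal.{u}} (h : IsRegularUF (uprod D D') a b) :
    ∃ ν : Cardinal.{u}, IsRegularUF D ν b ∧ ∀ ν' < ν, IsRegularUF D' a ν' := by
  obtain ⟨X, hXmem, hX⟩ := isRegularUF_iff.1 h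
  set Y : b.out → Set I := fun β => {i | {i' | (i, i') ∈ X β} ∈ D'}
  obtain ⟨ν, hlt, hle⟩ :=
    exists_least_strict_upper_bound fun i => #{β | i ∈ Y β}
  refine ⟨ν, ?_, fun ν' hν' => ?_⟩
  · exact IsRegularFamily.isRegularUF (X := Y) ⟨fun β => mem_uprod.1 (hXmem β), hlt⟩
      (Cardinal.mk_out b).ge
  · obtain ⟨i, hi⟩ := hle ν' hν'
    exact (isRegularFamily_sections hX i).isRegularUF hi

lemma isRegularUF_uprod_of_exists (ha : ℵ₀ ≤ a) {b ν : Cardinal.{u}}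
    (hD : IsRegularUF D ν b) (hD' : ∀ ν', ℵ₀ ≤ ν' → ν' < ν → IsRegularUF D' a ν') :
    IsRegularUF (uprod D D') a b := by
  obtain ⟨Y, hYmem, hY⟩ := isRegularUF_iff.1 hD
  have hW : ∀ i, ∃ W : {β | i ∈ Y β} → Set I', IsRegularFamily D' a W := fun i => by
    by_cases hinf : ℵ₀ ≤ #{β | i ∈ Y β}
    · exact (hD' _ hinf (hY i)).exists_isRegularFamily le_rfl
    · exact ⟨_, isRegularFamily_const_univ ((not_le.1 hinf).trans_le ha)⟩
  choose W hW using hW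
  exact (isRegularFamily_uprod hYmem hW).isRegularUF (Cardinal.mk_out b).ge

lemma isRegularUF_uprod_self_iff (ha : ℵ₀ ≤ a) :
    IsRegularUF (uprod D D') a a ↔ IsRegularUF D a a ∨ IsRegularUF D' a a := by
  refine ⟨fun h => ?_, ?_⟩
  · obtain ⟨ν, hD, hD'⟩ := h.exists_of_uprod
    rcases lt_or_ge a ν with haν | hνa
    · exact Or.inr (hD' a haν)
    · exact Or.inl (hD.mono_left hνa)
  · rintro (hD | hD')
    · exact isRegularUF_uprod_of_exists ha hD fun ν' _ hν' => isRegularUF_of_lt hν'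
    · refine isRegularUF_uprod_of_exists ha (isRegularUF_of_lt (Order.lt_succ a))
        fun ν' _ hν' => hD'.mono_right (Order.lt_succ_iff.1 hν')

end Product

theorem stmt15_general {I I' : Type u} (D : Ultrafilter I) (D' : Ultrafilter I')
    (lam mu : Cardinal.{u}) (hlam : ℵ₀ ≤ lam) :
    (IsRegularUF (uprod D D') lam mu ↔
      ∃ ν : Cardinal.{u}, IsRegularUF D ν mu ∧
        ∀ ν', ℵ₀ ≤ ν' → ν' < ν → IsRegularUF D' lam ν') ∧
    (IsRegularUF (uprod D D') lam lam ↔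
      IsRegularUF D lam lam ∨ IsRegularUF D' lam lam) := by
  refine ⟨⟨fun h => ?_, fun ⟨ν, hD, hD'⟩ => isRegularUF_uprod_of_exists hlam hD hD'⟩,
    isRegularUF_uprod_self_iff hlam⟩
  obtain ⟨ν, hD, hD'⟩ := h.exists_of_uprod
  exact ⟨ν, hD, fun ν' _ hν' => hD' ν' hν'⟩

/-- Proposition 7.1: `D × D'` is `(λ, μ)`-regular iff there is `ν` such that `D` is
`(ν, μ)`-regular and `D'` is `(λ, ν')`-regular for every infinite `ν' < ν`.
In particular, `D × D'` is `(λ, λ)`-regular iff `D` or `D'` is `(λ, λ)`-regular. -/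
theorem stmt15 {I I' : Type u} (D : Ultrafilter I) (D' : Ultrafilter I')
    (lam mu : Cardinal.{u}) (hlam : ℵ₀ ≤ lam) (hmu : ℵ₀ ≤ mu) :
    (IsRegularUF (uprod D D') lam mu ↔
      ∃ ν : Cardinal.{u}, IsRegularUF D ν mu ∧
        ∀ ν', ℵ₀ ≤ ν' → ν' < ν → IsRegularUF D' lam ν') ∧
    (IsRegularUF (uprod D D') lam lam ↔
      IsRegularUF D lam lam ∨ IsRegularUF D' lam lam) :=
  stmt15_general D D' lam mu hlam

end Paper
end
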